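/- Let 0 < k̲ < k̄. There exists a constant C > 0, independent of u and λ, such that for every λ ≥ 1 and every twice continuously differentiable function u : [0,1] → ℂ with u(0) = 0 and u'(0) = 0, one has ∫₀¹ |u''(x)|² e^{-2λx} dx ≥ C ∫₀¹ |u''(x)|² e^{-2λx} dx + C λ ∫₀¹ |u'(x)|² e^{-2λx} dx + C λ³ ∫₀¹ |u(x)|² e^{-2λx} dx. (Lemma 3.2, Carleman estimate for the operator d²/dx².) -/

import Mathlib

/-!
Writing `w = e^{-2λx}`, the pointwise bound `2λ⟪v, v'⟫ ≤ ‖v'‖² + λ²‖v‖²` gives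
`λ (‖v‖² w)' ≤ (‖v'‖² - λ²‖v‖²) w`; integrating over `[a, b]`, where `‖v‖² w` vanishes
at `a` and is nonnegative at `b`, yields the weighted Poincaré inequality
`λ² ∫ ‖v‖² w ≤ ∫ ‖v'‖² w` for `v a = 0`. Applied to `u` and to `u'` it gives
`λ³ ∫ |u|² w ≤ λ ∫ |u'|² w ≤ ∫ |u''|² w` for `λ ≥ 1`, so `C = 1/3` works.
-/

open MeasureTheory Real

section WeightedPoincare

variable {E : Type*} [NormedAddCommGroup E] [InnerProductSpace ℝ E]

theorem hasDerivAt_norm_sq_mul_exp {v : ℝ → E} {v' : E} {x : ℝ} (lam : ℝ)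
    (hv : HasDerivAt v v' x) :
    HasDerivAt (fun y => ‖v y‖ ^ 2 * exp (-2 * lam * y))
      ((2 * inner ℝ (v x) v' - 2 * lam * ‖v x‖ ^ 2) * exp (-2 * lam * x)) x := by
  have hexp : HasDerivAt (fun y => exp (-2 * lam * y)) (exp (-2 * lam * x) * (-2 * lam)) x := by
    simpa using ((hasDerivAt_id x).const_mul (-2 * lam)).exp
  exact (hv.norm_sq.mul hexp).congr_deriv (by ring)

theorem two_mul_real_inner_le_sq_mul_norm_sq_add (lam : ℝ) (v w : E) :
    2 * lam * inner ℝ v w ≤ lam ^ 2 * ‖v‖ ^ 2 + ‖w‖ ^ 2 := by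
  have h := norm_sub_sq_real (lam • v) w
  rw [real_inner_smul_left, norm_smul, mul_pow, Real.norm_eq_abs, sq_abs] at h
  nlinarith [sq_nonneg ‖lam • v - w‖]

theorem sq_mul_integral_norm_sq_mul_exp_le {v v' : ℝ → E} {a b lam : ℝ} (hab : a ≤ b)
    (hlam : 0 ≤ lam) (hv : ∀ x, HasDerivAt v (v' x) x) (hv' : Continuous v') (ha : v a = 0) :
    lam ^ 2 * ∫ x in a..b, ‖v x‖ ^ 2 * exp (-2 * lam * x) ≤
      ∫ x in a..b, ‖v' x‖ ^ 2 * exp (-2 * lam * x) := by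
  have hvc : Continuous v := continuous_iff_continuousAt.2 fun x => (hv x).continuousAt
  set F' : ℝ → ℝ := fun x =>
    (2 * inner ℝ (v x) (v' x) - 2 * lam * ‖v x‖ ^ 2) * exp (-2 * lam * x)
  have hFTC : ∫ x in a..b, F' x = ‖v b‖ ^ 2 * exp (-2 * lam * b) - 0 := by
    convert intervalIntegral.integral_eq_sub_of_hasDerivAt
      (fun x _ => hasDerivAt_norm_sq_mul_exp lam (hv x))
      ((by fun_prop : Continuous F').intervalIntegrable _ _) using 2
    simp [ha]
  have hF'_nonneg : 0 ≤ lam * ∫ x in a..b, F' x := by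
    rw [hFTC, sub_zero]
    positivity
  have hF'_le : lam * ∫ x in a..b, F' x ≤
      ∫ x in a..b, (‖v' x‖ ^ 2 * exp (-2 * lam * x)
        - lam ^ 2 * (‖v x‖ ^ 2 * exp (-2 * lam * x))) := by
    rw [← intervalIntegral.integral_const_mul]
    refine intervalIntegral.integral_mono_on hab
      ((by fun_prop : Continuous _).intervalIntegrable _ _)
      ((by fun_prop : Continuous _).intervalIntegrable _ _) fun x _ => ?_
    have := mul_le_mul_of_nonneg_right
      (two_mul_real_inner_le_sq_mul_norm_sq_add lam (v x) (v' x)) (exp_pos (-2 * lam * x)).le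
    simp only [F']
    linarith
  rw [intervalIntegral.integral_sub ((by fun_prop : Continuous _).intervalIntegrable _ _)
      ((by fun_prop : Continuous _).intervalIntegrable _ _),
    intervalIntegral.integral_const_mul] at hF'_le
  linarith

end WeightedPoincare

theorem carleman_estimate :
    ∃ C : ℝ, 0 < C ∧ ∀ lam : ℝ, 1 ≤ lam → ∀ u : ℝ → ℂ, ContDiff ℝ 2 u →
      u 0 = 0 → deriv u 0 = 0 →
      (∫ x in (0:ℝ)..1, ‖deriv (deriv u) x‖ ^ 2 * Real.exp (-2 * lam * x)) ≥
        C * (∫ x in (0:ℝ)..1, ‖deriv (deriv u) x‖ ^ 2 * Real.exp (-2 * lam * x))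
        + C * lam * (∫ x in (0:ℝ)..1, ‖deriv u x‖ ^ 2 * Real.exp (-2 * lam * x))
        + C * lam ^ 3 * (∫ x in (0:ℝ)..1, ‖u x‖ ^ 2 * Real.exp (-2 * lam * x)) := by
  refine ⟨1 / 3, by norm_num, fun lam hlam u hu hu0 hu'0 => ?_⟩
  obtain ⟨hu_diff, -, hu'⟩ := contDiff_succ_iff_deriv.mp (show ContDiff ℝ (1 + 1) u from hu)
  set I₀ := ∫ x in (0:ℝ)..1, ‖u x‖ ^ 2 * exp (-2 * lam * x)
  set I₁ := ∫ x in (0:ℝ)..1, ‖deriv u x‖ ^ 2 * exp (-2 * lam * x)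
  set I₂ := ∫ x in (0:ℝ)..1, ‖deriv (deriv u) x‖ ^ 2 * exp (-2 * lam * x)
  have hlam₀ : 0 ≤ lam := zero_le_one.trans hlam
  have h₀₁ : lam ^ 2 * I₀ ≤ I₁ := sq_mul_integral_norm_sq_mul_exp_le zero_le_one hlam₀
    (fun x => (hu_diff x).hasDerivAt) (hu.continuous_deriv one_le_two) hu0
  have h₁₂ : lam ^ 2 * I₁ ≤ I₂ := sq_mul_integral_norm_sq_mul_exp_le zero_le_one hlam₀
    (fun x => (hu'.differentiable one_ne_zero x).hasDerivAt) (hu'.continuous_deriv le_rfl) hu'0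
  have hI₁ : 0 ≤ I₁ := intervalIntegral.integral_nonneg zero_le_one fun x _ => by positivity
  have hlamI₁ : lam * I₁ ≤ I₂ := by
    nlinarith [mul_nonneg (mul_nonneg (sub_nonneg.2 hlam) hlam₀) hI₁]
  have hlamI₀ : lam ^ 3 * I₀ ≤ I₂ := by nlinarith [mul_le_mul_of_nonneg_left h₀₁ hlam₀]
  linarith
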